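/- arXiv:math/0105139 — 4 statements merged into one kernel-verified Lean document; each statement's English description precedes it below -/
import Mathlib

section
/- Let G1 and G2 be groups and let g ∈ G1 * G2 be a nontrivial element such that there exists t ∈ G1 * G2 with t⁻¹ g t = ι(g') for some g' ∈ G1, where ι : G1 → G1 * G2 is the canonical inclusion. Then the centralizer of g in G1 * G2 equals t (ι(Z(g'))) t⁻¹, where Z(g') is the centralizer of g' in G1. -/
open Monoid Monoid.CoprodI

namespace FPAux

variable {ι : Type*} {G : ι → Type*} [∀ i, Group (G i)]
variable [DecidableEq ι] [∀ i, DecidableEq (G i)]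

open Monoid.CoprodI.Word

theorem prod_equiv (x : CoprodI G) : Word.prod (Word.equiv x) = x :=
  Word.equiv.symm_apply_apply x

theorem equiv_prod (w : Word G) : Word.equiv (Word.prod w) = w :=
  Word.equiv.apply_symm_apply w

/-- The reversed, letter-wise inverted word. -/
def wordInv (w : Word G) : Word G where
  toList := (w.toList.map fun l => ⟨l.1, l.2⁻¹⟩).reverse
  ne_one := by
    intro l hl
    rw [List.mem_reverse, List.mem_map] at hl
    obtain ⟨a, ha, rfl⟩ := hl
    simpa using w.ne_one a ha
  chain_ne := by
    rw [List.isChain_reverse]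
    refine (List.isChain_map _).2 ?_
    exact w.chain_ne.imp fun a b h h' => h h'.symm

theorem prod_wordInv (w : Word G) : Word.prod (wordInv w) = (Word.prod w)⁻¹ := by
  rw [Word.prod, wordInv, Word.prod, List.prod_inv_reverse]
  simp [List.map_reverse, Function.comp_def]

theorem equiv_inv (x : CoprodI G) : Word.equiv x⁻¹ = wordInv (Word.equiv x) := by
  rw [← equiv_prod (wordInv (Word.equiv x)), prod_wordInv, prod_equiv]

theorem toList_equiv_inv (x : CoprodI G) :
    (Word.equiv x⁻¹).toList = ((Word.equiv x).toList.map fun l => ⟨l.1, l.2⁻¹⟩).reverse := by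
  rw [equiv_inv]; rfl

theorem length_equiv_inv (x : CoprodI G) :
    (Word.equiv x⁻¹).toList.length = (Word.equiv x).toList.length := by
  simp [toList_equiv_inv]

theorem equiv_one : (Word.equiv (1 : CoprodI G)) = Word.empty := by
  rw [← Word.prod_empty, equiv_prod]

theorem equiv_cons {i : ι} (c : G i) (x : CoprodI G) (hfst : (Word.equiv x).fstIdx ≠ some i)
    (hc : c ≠ 1) : Word.equiv (of c * x) = Word.cons c (Word.equiv x) hfst hc := by
  rw [← equiv_prod (Word.cons c (Word.equiv x) hfst hc), Word.prod_cons, prod_equiv]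

theorem head_strip {i : ι} {x : CoprodI G} (h : (Word.equiv x).fstIdx = some i) :
    ∃ (a : G i) (y : CoprodI G), a ≠ 1 ∧ x = of a * y ∧
      (Word.equiv y).fstIdx ≠ some i ∧
      (Word.equiv y).toList.length + 1 = (Word.equiv x).toList.length := by
  set p := Word.equivPair i (Word.equiv x) with hp
  have hr : Word.rcons p = Word.equiv x := by
    rw [hp, ← Word.equivPair_symm, Equiv.symm_apply_apply]
  have ha : p.head ≠ 1 := by
    intro h1
    rw [Word.rcons, dif_pos h1] at hr
    exact p.fstIdx_ne (hr ▸ h)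
  refine ⟨p.head, Word.prod p.tail, ha, ?_, ?_, ?_⟩
  · rw [← prod_equiv x, ← hr, Word.prod_rcons]
  · rw [equiv_prod]; exact p.fstIdx_ne
  · rw [equiv_prod, ← hr, Word.rcons, dif_neg ha]
    simp [Word.cons]

theorem mem_range_of_conj_eq {i : ι} (c d : G i) (hc : c ≠ 1) (x : CoprodI G)
    (h : of c * x = x * of d) : x ∈ (of : G i →* CoprodI G).range := by
  -- strong induction on the length of the word of `x`
  suffices H : ∀ (n : ℕ) (x : CoprodI G) (c d : G i), (Word.equiv x).toList.length = n →
      c ≠ 1 → of c * x = x * of d → x ∈ (of : G i →* CoprodI G).range from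
    H _ x c d rfl hc h
  clear hc h x c d
  intro n
  induction n using Nat.strong_induction_on with
  | _ n ih =>
  intro x c d hlen hc h
  by_cases hx1 : x = 1
  · exact ⟨1, by simp [hx1]⟩
  have hd : d ≠ 1 := by
    intro h1
    apply hc
    apply of_injective (i := i)
    rw [map_one]
    have h2 : of c * x = 1 * x := by rw [h, h1]; simp
    exact mul_right_cancel h2
  by_cases hfx : (Word.equiv x).fstIdx = some i
  · obtain ⟨a, y, ha, rfl, hfy, hly⟩ := head_strip hfx
    have h' : of (a⁻¹ * c * a) * y = y * of d := by
      calc of (a⁻¹ * c * a) * y = of a⁻¹ * (of c * (of a * y)) := by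
            rw [map_mul, map_mul]; group
        _ = of a⁻¹ * (of a * y * of d) := by rw [h]
        _ = y * of d := by rw [map_inv]; group
    have hc' : a⁻¹ * c * a ≠ 1 := by
      intro h1; apply hc
      have := congrArg (fun z => a * z * a⁻¹) h1
      simpa [mul_assoc] using this
    obtain ⟨b, rfl⟩ := ih _ (by omega) y _ d rfl hc' h'
    exact ⟨a * b, by rw [map_mul]⟩
  · by_cases hfxi : (Word.equiv x⁻¹).fstIdx = some i
    · have h' : of d⁻¹ * x⁻¹ = x⁻¹ * of c⁻¹ := by
        have := congrArg (fun z => z⁻¹) h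
        simpa [mul_assoc] using this.symm
      have hd' : d⁻¹ ≠ 1 := by simpa using hd
      obtain ⟨a, y, ha, hxinv, hfy, hly⟩ := head_strip hfxi
      have h'' : of (a⁻¹ * d⁻¹ * a) * y = y * of c⁻¹ := by
        rw [hxinv] at h'
        calc of (a⁻¹ * d⁻¹ * a) * y = of a⁻¹ * (of d⁻¹ * (of a * y)) := by
              rw [map_mul, map_mul]; group
          _ = of a⁻¹ * (of a * y * of c⁻¹) := by rw [h']
          _ = y * of c⁻¹ := by rw [map_inv]; group
      have hd'' : a⁻¹ * d⁻¹ * a ≠ 1 := by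
        intro h1; apply hd'
        have := congrArg (fun z => a * z * a⁻¹) h1
        simpa [mul_assoc] using this
      have hlen' : (Word.equiv y).toList.length < n := by
        rw [← hlen, ← length_equiv_inv x, ← hly]; omega
      obtain ⟨b, hb⟩ := ih _ hlen' y _ c⁻¹ rfl hd'' h''
      refine ⟨(a * b)⁻¹, ?_⟩
      rw [map_inv, map_mul, hb, ← hxinv, inv_inv]
    · exfalso
      have hd' : d⁻¹ ≠ 1 := by simpa using hd
      have hx1' : x⁻¹ ≠ 1 := by simpa using hx1
      have hL1 : (Word.equiv x).toList ≠ [] := by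
        intro hnil
        apply hx1
        rw [← prod_equiv x]
        have : Word.equiv x = Word.empty := Word.ext hnil
        rw [this, Word.prod_empty]
      -- word of `of c * x`
      have e1 : (Word.equiv (of c * x)).toList = ⟨i, c⟩ :: (Word.equiv x).toList := by
        rw [equiv_cons c x hfx hc]; rfl
      -- word of `of d⁻¹ * x⁻¹`
      have e2 : (Word.equiv (of d⁻¹ * x⁻¹)).toList = ⟨i, d⁻¹⟩ :: (Word.equiv x⁻¹).toList := by
        rw [equiv_cons d⁻¹ x⁻¹ hfxi hd']; rfl
      have e3 : of c * x = (of d⁻¹ * x⁻¹)⁻¹ := by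
        rw [mul_inv_rev, inv_inv, ← map_inv, inv_inv, h]
      have e4 : (Word.equiv (of c * x)).toList
          = (Word.equiv x).toList ++ [⟨i, d⟩] := by
        rw [e3, toList_equiv_inv, e2, toList_equiv_inv]
        simp only [List.map_cons, List.map_reverse, List.map_map]
        have : ((fun l : (Σ j, G j) => (⟨l.1, l.2⁻¹⟩ : Σ j, G j)) ∘
            fun l : (Σ j, G j) => (⟨l.1, l.2⁻¹⟩ : Σ j, G j)) = id := by
          funext l; simp
        rw [this, List.map_id]
        simp
      rw [e1] at e4
      have hh : (Word.equiv x).toList.head? = some ⟨i, c⟩ := by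
        rcases hn : (Word.equiv x).toList with _ | ⟨a, l⟩
        · exact absurd hn hL1
        · rw [hn, List.cons_append] at e4
          obtain ⟨h1, -⟩ := List.cons_eq_cons.mp e4
          simp [← h1]
      apply hfx
      rw [Word.fstIdx, hh]
      rfl

section Transfer

universe u v

variable (G₁ : Type u) (G₂ : Type v) [Group G₁] [Group G₂]

/-- The family of two groups indexed by `Bool`. -/
def FP : Bool → Type (max u v) := fun b => cond b (ULift.{v} G₁) (ULift.{u} G₂)

instance : ∀ b, Group (FP G₁ G₂ b)
  | true => (inferInstance : Group (ULift G₁))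
  | false => (inferInstance : Group (ULift G₂))

/-- The canonical map `G₁ ∗ G₂ →* CoprodI (FP G₁ G₂)`. -/
def toI : Coprod G₁ G₂ →* CoprodI (FP G₁ G₂) :=
  Coprod.lift
    ((CoprodI.of (M := FP G₁ G₂) (i := true)).comp (MulEquiv.ulift (α := G₁)).symm.toMonoidHom)
    ((CoprodI.of (M := FP G₁ G₂) (i := false)).comp (MulEquiv.ulift (α := G₂)).symm.toMonoidHom)

/-- The canonical map `CoprodI (FP G₁ G₂) →* G₁ ∗ G₂`. -/
def ofI : CoprodI (FP G₁ G₂) →* Coprod G₁ G₂ :=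
  CoprodI.lift fun b =>
    match b with
    | true => (Coprod.inl : G₁ →* Coprod G₁ G₂).comp
        (MulEquiv.ulift (α := G₁)).toMonoidHom
    | false => (Coprod.inr : G₂ →* Coprod G₁ G₂).comp
        (MulEquiv.ulift (α := G₂)).toMonoidHom

theorem toI_inl (a : G₁) :
    toI G₁ G₂ (Coprod.inl a) = CoprodI.of (M := FP G₁ G₂) (i := true) ⟨a⟩ :=
  Coprod.lift_apply_inl _ _ _

theorem ofI_of_true (a : FP G₁ G₂ true) :
    ofI G₁ G₂ (CoprodI.of (M := FP G₁ G₂) (i := true) a) = Coprod.inl a.down :=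
  CoprodI.lift_of _ _

theorem ofI_toI (x : Coprod G₁ G₂) : ofI G₁ G₂ (toI G₁ G₂ x) = x := by
  have : (ofI G₁ G₂).comp (toI G₁ G₂) = MonoidHom.id _ := by
    apply Coprod.hom_ext <;> ext a <;> rfl
  calc ofI G₁ G₂ (toI G₁ G₂ x) = ((ofI G₁ G₂).comp (toI G₁ G₂)) x := rfl
    _ = x := by rw [this]; rfl

theorem mem_range_inl_of_commute {g' : G₁} (hg' : g' ≠ 1) {x : Coprod G₁ G₂}
    (hx : Coprod.inl g' * x = x * Coprod.inl g') :
    x ∈ (Coprod.inl : G₁ →* Coprod G₁ G₂).range := by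
  classical
  have hx' : CoprodI.of (M := FP G₁ G₂) (i := true) ⟨g'⟩ * toI G₁ G₂ x
      = toI G₁ G₂ x * CoprodI.of (M := FP G₁ G₂) (i := true) ⟨g'⟩ := by
    have := congrArg (toI G₁ G₂) hx
    simpa [map_mul, toI_inl] using this
  have hc : (⟨g'⟩ : FP G₁ G₂ true) ≠ 1 := by
    intro h1; exact hg' (congrArg ULift.down h1)
  obtain ⟨m, hm⟩ := mem_range_of_conj_eq (G := FP G₁ G₂) (i := true) _ _ hc _ hx'
  refine ⟨m.down, ?_⟩
  have := congrArg (ofI G₁ G₂) hm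
  rw [ofI_of_true, ofI_toI] at this
  exact this

theorem centralizer_inl {g' : G₁} (hg' : g' ≠ 1) :
    Subgroup.centralizer {(Coprod.inl g' : Coprod G₁ G₂)} =
      Subgroup.map (Coprod.inl : G₁ →* Coprod G₁ G₂) (Subgroup.centralizer {g'}) := by
  ext x
  rw [Subgroup.mem_centralizer_iff]
  constructor
  · intro hx
    obtain ⟨h, rfl⟩ := mem_range_inl_of_commute G₁ G₂ hg' (hx _ rfl)
    refine ⟨h, ?_, rfl⟩
    rw [SetLike.mem_coe, Subgroup.mem_centralizer_iff]
    rintro y rfl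
    apply Coprod.inl_injective (M := G₁) (N := G₂)
    rw [map_mul, map_mul]
    exact hx _ rfl
  · rintro ⟨h, hh, rfl⟩
    rintro y rfl
    rw [SetLike.mem_coe, Subgroup.mem_centralizer_iff] at hh
    rw [← map_mul, ← map_mul, hh _ rfl]

end Transfer

theorem centralizer_conj_eq {G : Type*} [Group G] (t a : G) :
    Subgroup.centralizer {t * a * t⁻¹} =
      Subgroup.map (MulAut.conj t).toMonoidHom (Subgroup.centralizer {a}) := by
  ext x
  rw [Subgroup.mem_centralizer_iff]
  constructor
  · intro hx
    refine ⟨t⁻¹ * x * t, ?_, ?_⟩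
    · rw [SetLike.mem_coe, Subgroup.mem_centralizer_iff]
      rintro y rfl
      have := hx _ rfl
      have h2 := congrArg (fun z => t⁻¹ * z * t) this
      simpa [mul_assoc] using h2
    · simp [MulAut.conj_apply, mul_assoc]
  · rintro ⟨y, hy, rfl⟩
    rintro z rfl
    rw [SetLike.mem_coe, Subgroup.mem_centralizer_iff] at hy
    have := hy _ rfl
    have h2 := congrArg (fun z => t * z * t⁻¹) this
    simpa [MulAut.conj_apply, mul_assoc] using h2

end FPAux

open Monoid

/-- If `g ≠ 1` in `G₁ ∗ G₂` is conjugate, via `t⁻¹ g t = ι g'`, to an element `g'` of the first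
free factor, then the centralizer of `g` is `t (ι (Z(g'))) t⁻¹`. -/
theorem centralizer_eq_conj_image_of_conj_into_factor
    (G₁ G₂ : Type*) [Group G₁] [Group G₂]
    (g t : Monoid.Coprod G₁ G₂) (g' : G₁)
    (hg : g ≠ 1)
    (ht : t⁻¹ * g * t = Coprod.inl g') :
    Subgroup.centralizer {g} =
      Subgroup.map (MulAut.conj t).toMonoidHom
        (Subgroup.map (Coprod.inl : G₁ →* Monoid.Coprod G₁ G₂)
          (Subgroup.centralizer {g'})) := by
  have hg1 : g = t * Coprod.inl g' * t⁻¹ := by rw [← ht]; group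
  have hg' : g' ≠ 1 := by
    intro h1
    apply hg
    rw [hg1, h1, map_one, mul_one, mul_inv_cancel]
  rw [hg1, FPAux.centralizer_conj_eq, FPAux.centralizer_inl G₁ G₂ hg']
end

section
/- Let X be a topological space and ω : S¹ → X a free loop. Then the image of the trace homomorphism t : π₁(ΩX, ω) → π₁(X, ω(1)) is exactly the centralizer of [ω] in π₁(X, ω(1)); in particular t is surjective onto Z([ω]). -/
/-!
A loop `α` in `ΩX` at `ω` is a map `I × S¹ → X` that is `ω` at both ends; precomposed with
`I × I → I × S¹`, `(s, t) ↦ (s, exp(2πit))`, it is a square whose sides are `[ω]`, `t(α)`, `[ω]`,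
`t(α)`, so `[ω] · t(α) = t(α) · [ω]`.

Conversely, let `γ` commute with `[ω]`. Sliding the base point of `ω` along `γ` is a homotopy of
loops from `ω` to `γ⁻¹ ω γ` whose base point traces `γ`, and `γ⁻¹ ω γ ≃ ω` rel endpoints because
`γ` commutes with `ω`. Each stage of the concatenated homotopy is a closed loop, so it descends
through `I → S¹` to a loop in `ΩX` at `ω` whose trace is `γ · const ≃ γ`.
-/

open CategoryTheory
open scoped FundamentalGroupoid

noncomputable section

attribute [local instance] Path.Homotopic.setoid

/-- The free loop space of `X`: continuous maps `S¹ → X` with the compact-open topology. -/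
abbrev FreeLoopSpace (X : Type*) [TopologicalSpace X] := C(Circle, X)

/-- Evaluation of a free loop at the basepoint `1 ∈ S¹`. -/
def evalAtOne (X : Type*) [TopologicalSpace X] : C(FreeLoopSpace X, X) :=
  ⟨fun ω => ω 1, continuous_eval_const 1⟩

universe u

/-- The homomorphism of fundamental groups induced by a continuous map. -/
def inducedHom {X Y : Type u} [TopologicalSpace X] [TopologicalSpace Y] (f : C(X, Y)) (x : X) :
    Aut (FundamentalGroupoid.mk x) →* Aut (FundamentalGroupoid.mk (f x)) :=
  CategoryTheory.Functor.mapAut (FundamentalGroupoid.mk x)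
    (show FundamentalGroupoid X ⥤ FundamentalGroupoid Y from
      πₘ (show TopCat.of X ⟶ TopCat.of Y from TopCat.ofHom f))

/-- A free loop `ω : S¹ → X`, reparametrized as a path from `ω 1` to itself. -/
def loopPath {X : Type*} [TopologicalSpace X] (ω : FreeLoopSpace X) : Path (ω 1) (ω 1) where
  toFun t := ω (Circle.exp (2 * Real.pi * (t : ℝ)))
  continuous_toFun := ω.continuous.comp (Circle.exp.continuous.comp (by continuity))
  source' := by simp
  target' := by simp

/-- The class `[ω] ∈ π₁(X, ω(1))` of a free loop `ω`. -/
def loopClass {X : Type*} [TopologicalSpace X] (ω : FreeLoopSpace X) :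
    Aut (FundamentalGroupoid.mk (ω 1)) :=
  (CategoryTheory.Groupoid.isoEquivHom
      (FundamentalGroupoid.mk (ω 1)) (FundamentalGroupoid.mk (ω 1))).symm
    (⟦loopPath ω⟧ : Path.Homotopic.Quotient (ω 1) (ω 1))

open scoped unitInterval
open Topology

def circleLoop : Path (1 : Circle) 1 where
  toFun t := Circle.exp (2 * Real.pi * t)
  continuous_toFun := by fun_prop
  source' := by simp
  target' := by simp

theorem circleLoop_surjective : Function.Surjective circleLoop := by
  intro z
  have hθ := toIcoMod_mem_Ico Real.two_pi_pos 0 (Complex.arg z)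
  rw [zero_add] at hθ
  refine ⟨⟨toIcoMod Real.two_pi_pos 0 (Complex.arg z) / (2 * Real.pi),
    div_nonneg hθ.1 Real.two_pi_pos.le, (div_le_one Real.two_pi_pos).mpr hθ.2.le⟩, ?_⟩
  change Circle.exp (2 * Real.pi * (_ / (2 * Real.pi))) = z
  rw [mul_div_cancel₀ _ Real.two_pi_pos.ne', toIcoMod, Circle.periodic_exp.sub_zsmul_eq,
    Circle.exp_arg]

theorem factorsThrough_circleLoop {Z : Type*} {f : I → Z} (hf : f 0 = f 1) :
    Function.FactorsThrough f circleLoop := by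
  intro s t hst
  obtain ⟨m, hm⟩ := Circle.exp_eq_exp.mp hst
  have hst : (s : ℝ) = t + m := by
    have := Real.pi_pos
    apply mul_left_cancel₀ (by positivity : 2 * Real.pi ≠ 0)
    linear_combination hm
  have := s.2.1; have := s.2.2; have := t.2.1; have := t.2.2
  have hm_le : m ≤ 1 := by exact_mod_cast (show (m : ℝ) ≤ 1 by linarith)
  have hm_ge : -1 ≤ m := by exact_mod_cast (show (-1 : ℝ) ≤ m by linarith)
  obtain rfl | rfl | rfl : m = 0 ∨ m = 1 ∨ m = -1 := by omega
  · exact congrArg f (Subtype.ext (by simpa using hst))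
  · obtain rfl : s = 1 := Set.Icc.coe_eq_one.mp (by push_cast at hst; linarith)
    obtain rfl : t = 0 := Set.Icc.coe_eq_zero.mp (by push_cast at hst; linarith)
    exact hf.symm
  · obtain rfl : s = 0 := Set.Icc.coe_eq_zero.mp (by push_cast at hst; linarith)
    obtain rfl : t = 1 := Set.Icc.coe_eq_one.mp (by push_cast at hst; linarith)
    exact hf

theorem isQuotientMap_prodMap_circleLoop (Z : Type*) [TopologicalSpace Z] [CompactSpace Z]
    [T2Space Z] : IsQuotientMap ((ContinuousMap.id Z).prodMap circleLoop.toContinuousMap) :=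
  .of_surjective_continuous (Function.surjective_id.prodMap circleLoop_surjective)
    (ContinuousMap.continuous _)

def Path.toHomotopy {X Y : Type*} [TopologicalSpace X] [LocallyCompactSpace X]
    [TopologicalSpace Y] {f g : C(X, Y)} (α : Path f g) : f.Homotopy g where
  toContinuousMap := ContinuousMap.uncurry α.toContinuousMap
  map_zero_left x := by simp
  map_one_left x := by simp

section

variable {Y : Type*} [TopologicalSpace Y]

theorem exists_path_of_homotopy_comp_circleLoop {f g : C(Circle, Y)}
    (H : (f.comp circleLoop.toContinuousMap).Homotopy (g.comp circleLoop.toContinuousMap))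
    (hH : ∀ s, H (s, 0) = H (s, 1)) :
    ∃ α : Path f g, ∀ s t, α s (circleLoop t) = H (s, t) := by
  have hq := isQuotientMap_prodMap_circleLoop I
  have hfac : Function.FactorsThrough H.toContinuousMap
      ((ContinuousMap.id I).prodMap circleLoop.toContinuousMap) := by
    rintro ⟨s, t⟩ ⟨s', t'⟩ h
    obtain ⟨rfl, h⟩ := Prod.ext_iff.mp h
    exact factorsThrough_circleLoop (f := fun t => H (s, t)) (hH s) h
  let F := (hq.lift H.toContinuousMap hfac).curry
  have hF : ∀ s t, F s (circleLoop t) = H (s, t) := fun s t =>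
    DFunLike.congr_fun (hq.lift_comp H.toContinuousMap hfac) (s, t)
  have hF_ends : F 0 = f ∧ F 1 = g := by
    constructor <;> ext z <;> obtain ⟨t, rfl⟩ := circleLoop_surjective z <;> simp [hF]
  exact ⟨⟨F, hF_ends.1, hF_ends.2⟩, hF⟩

/-- Stage `s` runs through `γ⁻¹ p γ` on `[(1 - s) / 2, (3 + s) / 4]`, a loop at `γ s`. -/
def Path.slideHomotopy {x y : Y} (γ : Path x y) (p : Path x x) :
    p.toContinuousMap.Homotopy (γ.symm.trans (p.trans γ)).toContinuousMap where
  toFun st := (γ.symm.trans (p.trans γ)).extend ((1 - st.1) / 2 + st.2 * (1 + 3 * st.1) / 4)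
  continuous_toFun := by fun_prop
  map_zero_left t := by
    have ht0 := t.2.1; have ht1 := t.2.2
    simp only [Set.Icc.coe_zero]
    rw [Path.extend_apply _ ⟨by linarith, by linarith⟩, Path.trans_apply]
    split_ifs with h
    · obtain rfl : t = 0 := Set.Icc.coe_eq_zero.mp (by simp at h; linarith)
      simp
    · rw [Path.trans_apply, dif_pos (by simp; linarith)]
      exact congrArg p (Subtype.ext (by simp; ring))
  map_one_left t := by
    simp only [Set.Icc.coe_one]
    rw [show (1 - 1) / 2 + (t : ℝ) * (1 + 3 * 1) / 4 = t by ring, Path.extend_extends']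
    rfl

theorem Path.slideHomotopy_apply_zero {x y : Y} (γ : Path x y) (p : Path x x) (s : I) :
    γ.slideHomotopy p (s, 0) = γ s := by
  have hs0 := s.2.1; have hs1 := s.2.2
  change (γ.symm.trans (p.trans γ)).extend _ = _
  rw [Path.extend_apply _ ⟨by simp; linarith, by simp; linarith⟩, Path.trans_apply,
    dif_pos (by simp; linarith)]
  exact congrArg γ (Subtype.ext (by simp; ring))

theorem Path.slideHomotopy_apply_one {x y : Y} (γ : Path x y) (p : Path x x) (s : I) :
    γ.slideHomotopy p (s, 1) = γ s := by
  have hs0 := s.2.1; have hs1 := s.2.2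
  change (γ.symm.trans (p.trans γ)).extend _ = _
  rw [Path.extend_apply _ ⟨by simp; linarith, by simp; linarith⟩, Path.trans_apply,
    dif_neg (by simp; linarith), Path.trans_apply]
  split_ifs with h
  · obtain rfl : s = 0 := Set.Icc.coe_eq_zero.mp (by simp at h; linarith)
    convert p.target using 2
    · ext; simp; norm_num
    · simp
  · exact congrArg γ (Subtype.ext (by simp; ring))

theorem loopPath_trans_map_evalAtOne_homotopic (ω : FreeLoopSpace Y) (α : Path ω ω) :
    ((loopPath ω).trans (α.map (evalAtOne Y).continuous)).Homotopic
      ((α.map (evalAtOne Y).continuous).trans (loopPath ω)) :=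
  Path.Homotopic.map_trans_evalAt α.toHomotopy circleLoop

theorem exists_path_map_evalAtOne_homotopic (ω : FreeLoopSpace Y) (γ : Path (ω 1) (ω 1))
    (hγ : ((loopPath ω).trans γ).Homotopic (γ.trans (loopPath ω))) :
    ∃ α : Path ω ω, (α.map (evalAtOne Y).continuous).Homotopic γ := by
  have hconj : (γ.symm.trans ((loopPath ω).trans γ)).Homotopic (loopPath ω) :=
    ((Path.Homotopic.refl _).hcomp hγ).trans <| (Path.Homotopic.trans_assoc _ _ _).symm.trans <|
      ((Path.Homotopic.symm_trans γ).hcomp (.refl _)).trans (Path.Homotopic.refl_trans _)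
  let H := (γ.slideHomotopy (loopPath ω)).trans hconj.some.toHomotopy
  have hH : ∀ s, H (s, 0) = γ.trans (Path.refl _) s ∧ H (s, 1) = γ.trans (Path.refl _) s := by
    intro s
    simp only [H, ContinuousMap.Homotopy.trans_apply, Path.trans_apply]
    split_ifs <;> simp [Path.slideHomotopy_apply_zero, Path.slideHomotopy_apply_one]
  obtain ⟨α, hα⟩ :=
    exists_path_of_homotopy_comp_circleLoop H fun s => (hH s).1.trans (hH s).2.symm
  have htrace : α.map (evalAtOne Y).continuous = γ.trans (Path.refl _) := by
    ext s
    exact (congrArg (α s) circleLoop.source.symm).trans ((hα s 0).trans (hH s).1)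
  exact ⟨α, htrace ▸ ⟨Path.Homotopy.transRefl γ⟩⟩

theorem exists_map_evalAtOne_homotopic_iff (ω : FreeLoopSpace Y) (γ : Path (ω 1) (ω 1)) :
    (∃ α : Path ω ω, (α.map (evalAtOne Y).continuous).Homotopic γ) ↔
      ((loopPath ω).trans γ).Homotopic (γ.trans (loopPath ω)) := by
  refine ⟨fun ⟨α, hα⟩ => ?_, exists_path_map_evalAtOne_homotopic ω γ⟩
  exact (((Path.Homotopic.refl _).hcomp hα.symm).trans
    (loopPath_trans_map_evalAtOne_homotopic ω α)).trans (hα.hcomp (.refl _))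

end

theorem CategoryTheory.Aut.mem_centralizer_singleton_iff {C : Type*} [Category C] {X : C}
    {f g : Aut X} : g ∈ Subgroup.centralizer {f} ↔ Iso.hom f ≫ Iso.hom g = Iso.hom g ≫ Iso.hom f :=
  Subgroup.mem_centralizer_singleton_iff.trans Iso.ext_iff

theorem FundamentalGroupoid.surjective_isoEquivHom_symm_mk {X : Type*} [TopologicalSpace X]
    (x : X) : Function.Surjective fun p : Path x x =>
      ((Groupoid.isoEquivHom (mk x) (mk x)).symm ⟦p⟧ : Aut (mk x)) :=
  (Groupoid.isoEquivHom _ _).symm.surjective.comp Path.Homotopic.Quotient.mk_surjective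

theorem mem_range_inducedHom_iff {X Y : Type u} [TopologicalSpace X] [TopologicalSpace Y]
    (f : C(X, Y)) (x : X) (γ : Path (f x) (f x)) :
    ((Groupoid.isoEquivHom _ _).symm ⟦γ⟧ : Aut (FundamentalGroupoid.mk (f x))) ∈
        (inducedHom f x).range ↔
      ∃ p : Path x x, (p.map f.continuous).Homotopic γ := by
  constructor
  · rintro ⟨b, hb⟩
    obtain ⟨p, rfl⟩ := FundamentalGroupoid.surjective_isoEquivHom_symm_mk x b
    exact ⟨p, Quotient.exact (congrArg Iso.hom hb)⟩
  · rintro ⟨p, hp⟩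
    exact ⟨(Groupoid.isoEquivHom _ _).symm ⟦p⟧, Iso.ext (Quotient.sound hp)⟩

/-- The image of the trace homomorphism `t : π₁(ΩX, ω) → π₁(X, ω(1))`, induced by evaluation
of free loops at the basepoint, is exactly the centralizer of `[ω]` in `π₁(X, ω(1))`;
in particular `t` is surjective onto `Z([ω])`. -/
theorem trace_hom_range_eq_centralizer
    (X : Type*) [TopologicalSpace X] (ω : FreeLoopSpace X) :
    (inducedHom (evalAtOne X) ω).range = Subgroup.centralizer {loopClass ω} := by
  ext g
  obtain ⟨γ, rfl⟩ := FundamentalGroupoid.surjective_isoEquivHom_symm_mk _ g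
  exact (mem_range_inducedHom_iff (evalAtOne X) ω γ).trans <|
    (exists_map_evalAtOne_homotopic_iff ω γ).trans <| Path.Homotopic.Quotient.eq.symm.trans
      (Aut.mem_centralizer_singleton_iff (f := loopClass ω)
        (g := (Groupoid.isoEquivHom _ _).symm ⟦γ⟧)).symm
end
end

section
/- Let G and H be groups, G nontrivial and H nontrivial, and let g ∈ G * H lie in the image of G (i.e., g = ι_G(g') for g' ∈ G, g' ≠ 1). Then the centralizer of g in G * H is contained in the image of G, and equals ι_G(Z_G(g')). -/
/-!
Write `z ∈ G ∗ H` as `z = a * y * b` with `a, b ∈ G` and `y` a reduced word that neither starts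
nor ends with a letter from `G`. If `y ≠ 1`, then for `1 ≠ g ∈ G` the element `y⁻¹ g y` is again a
reduced word, of length at least three and starting outside `G`, so it is not in `G`. Hence
`z⁻¹ g z ∈ G` forces `z ∈ G`; in particular anything commuting with `g` lies in `G`, and
injectivity of `ι_G` identifies the centralizer with `ι_G(Z_G(g))`.
-/

open Monoid

theorem Subgroup.comap_centralizer_image {G K : Type*} [Group G] [Group K] {f : G →* K}
    (hf : Function.Injective f) (s : Set G) :
    (Subgroup.centralizer (f '' s)).comap f = Subgroup.centralizer s := by
  ext x
  simp [Subgroup.mem_centralizer_iff, ← map_mul, hf.eq_iff]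

namespace Monoid.CoprodI

variable {ι : Type*}

section Monoid

variable {M : ι → Type*} [∀ i, Monoid (M i)]

namespace NeWord

theorem toWord_eq_of_prod_eq {i j k l : ι} {w : NeWord M i j} {w' : NeWord M k l}
    (h : w.prod = w'.prod) : w.toWord = w'.toWord := by
  classical
  exact Word.equiv.symm.injective h

theorem prod_ne_of {i j k : ι} (w : NeWord M j k) (hj : j ≠ i) (a : M i) : w.prod ≠ of a := by
  classical
  intro h
  by_cases ha : a = 1
  · subst ha
    have : w.toWord = Word.empty := Word.equiv.symm.injective (h.trans (map_one of))
    exact w.toList_ne_nil (congrArg Word.toList this)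
  · have : w.toList.head? = (singleton a ha).toList.head? :=
      congrArg (fun w => w.toList.head?) (toWord_eq_of_prod_eq (h.trans (prod_singleton a ha).symm))
    rw [toList_head?, toList_head?] at this
    exact hj (congrArg Sigma.fst (Option.some.inj this))

theorem prod_eq_of_or_eq_of_mul_prod {i j : ι} (w : NeWord M i j) :
    (i = j ∧ ∃ a : M i, w.prod = of a) ∨
      ∃ (k : ι) (r : NeWord M k j), k ≠ i ∧ ∃ a : M i, w.prod = of a * r.prod := by
  induction w with
  | singleton x hx => exact .inl ⟨rfl, x, prod_singleton x hx⟩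
  | append w₁ hne w₂ ih₁ _ =>
    rcases ih₁ with ⟨rfl, a, ha⟩ | ⟨k, r, hk, a, ha⟩
    · exact .inr ⟨_, w₂, hne.symm, a, by rw [append_prod, ha]⟩
    · exact .inr ⟨k, r.append hne w₂, hk, a, by rw [append_prod, append_prod, ha, mul_assoc]⟩

theorem prod_eq_of_or_eq_prod_mul_of {i j : ι} (w : NeWord M i j) :
    (i = j ∧ ∃ a : M j, w.prod = of a) ∨
      ∃ (k : ι) (r : NeWord M i k), k ≠ j ∧ ∃ a : M j, w.prod = r.prod * of a := by
  induction w with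
  | singleton x hx => exact .inl ⟨rfl, x, prod_singleton x hx⟩
  | append w₁ hne w₂ _ ih₂ =>
    rcases ih₂ with ⟨rfl, a, ha⟩ | ⟨k, r, hk, a, ha⟩
    · exact .inr ⟨_, w₁, hne, a, by rw [append_prod, ha]⟩
    · exact .inr ⟨k, w₁.append hne r, hk, a, by rw [append_prod, append_prod, ha, mul_assoc]⟩

end NeWord

theorem eq_of_or_eq_of_mul_prod (i : ι) (z : CoprodI M) :
    (∃ a : M i, z = of a) ∨
      ∃ (j k : ι) (y : NeWord M j k), j ≠ i ∧ ∃ a : M i, z = of a * y.prod := by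
  classical
  by_cases hz : Word.equiv z = Word.empty
  · exact .inl ⟨1, by rw [map_one, ← Word.equiv.symm_apply_apply z, hz]; rfl⟩
  obtain ⟨j, k, w, hw⟩ := NeWord.of_word _ hz
  have hzw : z = w.prod := by rw [NeWord.prod, hw]; exact (Word.equiv.symm_apply_apply z).symm
  rcases eq_or_ne j i with rfl | hj
  · rcases w.prod_eq_of_or_eq_of_mul_prod with ⟨rfl, a, ha⟩ | ⟨k', r, hk', a, ha⟩
    · exact .inl ⟨a, hzw.trans ha⟩
    · exact .inr ⟨k', k, r, hk', a, hzw.trans ha⟩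
  · exact .inr ⟨j, k, w, hj, 1, by rw [map_one, one_mul, hzw]⟩

theorem eq_of_or_eq_of_mul_prod_mul_of (i : ι) (z : CoprodI M) :
    (∃ a : M i, z = of a) ∨ ∃ (j k : ι) (y : NeWord M j k), j ≠ i ∧ k ≠ i ∧
      ∃ a b : M i, z = of a * y.prod * of b := by
  rcases eq_of_or_eq_of_mul_prod i z with hz | ⟨j, k, y, hj, a, hz⟩
  · exact .inl hz
  rcases eq_or_ne k i with rfl | hk
  · rcases y.prod_eq_of_or_eq_prod_mul_of with ⟨rfl, -⟩ | ⟨k', r, hk', b, hb⟩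
    · exact absurd rfl hj
    · exact .inr ⟨j, k', r, hj, hk', a, b, by rw [hz, hb, mul_assoc]⟩
  · exact .inr ⟨j, k, y, hj, hk, a, 1, by rw [hz, map_one, mul_one]⟩

end Monoid

section Group

variable {G : ι → Type*} [∀ i, Group (G i)]

/-- `y⁻¹ * of a * y` is spelled by the reduced word `y.inv, a, y`, which starts outside `i`. -/
theorem NeWord.inv_prod_mul_of_mul_prod_ne_of {i j k : ι} (y : NeWord G j k) (hj : j ≠ i)
    (hk : k ≠ i) {a : G i} (ha : a ≠ 1) (c : G i) : y.prod⁻¹ * of a * y.prod ≠ of c := by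
  simpa [append_prod, inv_prod] using
    ((y.inv.append hj (singleton a ha)).append hj.symm y).prod_ne_of hk c

theorem mem_range_of_inv_mul_of_mul_mem_range {i : ι} {a : G i} (ha : a ≠ 1) {z : CoprodI G}
    (h : z⁻¹ * of a * z ∈ (of (i := i)).range) : z ∈ (of (i := i)).range := by
  obtain ⟨c, hc⟩ := h
  rcases eq_of_or_eq_of_mul_prod_mul_of i z with ⟨b, rfl⟩ | ⟨j, k, y, hj, hk, p, q, rfl⟩
  · exact ⟨b, rfl⟩
  refine absurd ?_ (y.inv_prod_mul_of_mul_prod_ne_of hj hk (a := p⁻¹ * a * p) ?_ (q * c * q⁻¹))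
  · simp only [map_mul, map_inv, hc]
    group
  · simpa using (conj_eq_one_iff (a := p⁻¹)).not.mpr ha

theorem centralizer_singleton_of_le_range {i : ι} {a : G i} (ha : a ≠ 1) :
    Subgroup.centralizer {of a} ≤ (of (i := i)).range := fun z hz =>
  mem_range_of_inv_mul_of_mul_mem_range ha
    ⟨a, by rw [mul_assoc, ← Subgroup.mem_centralizer_singleton_iff.mp hz, inv_mul_cancel_left]⟩

end Group

end Monoid.CoprodI

namespace Monoid.Coprod

variable {G H : Type*} [Group G] [Group H]

/-- The factors are taken as subgroups of `G ∗ H` so that they form a `Bool`-indexed family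
in one universe even when `G` and `H` do not share one. -/
def factor (b : Bool) : Subgroup (G ∗ H) := cond b inl.range inr.range

def toCoprodI : G ∗ H →* CoprodI fun b => factor (G := G) (H := H) b :=
  lift ((CoprodI.of (i := true)).comp (inl : G →* G ∗ H).rangeRestrict)
    ((CoprodI.of (i := false)).comp (inr : H →* G ∗ H).rangeRestrict)

@[simp]
theorem toCoprodI_inl (g : G) :
    toCoprodI (inl g : G ∗ H) = CoprodI.of (i := true) ((inl : G →* G ∗ H).rangeRestrict g) :=
  lift_apply_inl _ _ _

theorem lift_subtype_toCoprodI (x : G ∗ H) :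
    CoprodI.lift (fun b => (factor b).subtype) (toCoprodI x) = x :=
  DFunLike.congr_fun (f := (CoprodI.lift fun b => (factor b).subtype).comp toCoprodI)
    (g := MonoidHom.id _) (by ext <;> rfl) x

theorem centralizer_inl_le_range {g : G} (hg : g ≠ 1) :
    Subgroup.centralizer {(inl g : G ∗ H)} ≤ (inl : G →* G ∗ H).range := by
  intro x hx
  have hg' : (inl : G →* G ∗ H).rangeRestrict g ≠ 1 := fun h =>
    hg (inl_injective (by simpa using congrArg Subtype.val h))
  have hx' : toCoprodI x ∈
      Subgroup.centralizer {CoprodI.of (i := true) ((inl : G →* G ∗ H).rangeRestrict g)} := by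
    simpa using Subgroup.map_centralizer_le_centralizer_image _ toCoprodI ⟨x, hx, rfl⟩
  obtain ⟨c, hc⟩ := CoprodI.centralizer_singleton_of_le_range hg' hx'
  rw [← lift_subtype_toCoprodI x, ← hc, CoprodI.lift_of]
  exact c.2

end Monoid.Coprod

theorem centralizer_of_mem_factor_general
    (G H : Type*) [Group G] [Group H]
    (g' : G) (hg : g' ≠ 1) :
    Subgroup.centralizer {(Coprod.inl g' : Monoid.Coprod G H)} ≤
        (Coprod.inl : G →* Monoid.Coprod G H).range ∧
      Subgroup.centralizer {(Coprod.inl g' : Monoid.Coprod G H)} =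
        Subgroup.map (Coprod.inl : G →* Monoid.Coprod G H) (Subgroup.centralizer {g'}) := by
  have hle := Coprod.centralizer_inl_le_range (H := H) hg
  refine ⟨hle, ?_⟩
  rw [← Subgroup.comap_centralizer_image (f := (Coprod.inl : G →* Monoid.Coprod G H))
    Coprod.inl_injective, Set.image_singleton, Subgroup.map_comap_eq, inf_eq_right.mpr hle]

/-- The centralizer in `G ∗ H` of a nontrivial element of the free factor `G` is contained in the
image of `G`, and equals the image of the centralizer taken in `G`. -/
theorem centralizer_of_mem_factor
    (G H : Type*) [Group G] [Group H] [Nontrivial G] [Nontrivial H]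
    (g' : G) (hg : g' ≠ 1) :
    Subgroup.centralizer {(Coprod.inl g' : Monoid.Coprod G H)} ≤
        (Coprod.inl : G →* Monoid.Coprod G H).range ∧
      Subgroup.centralizer {(Coprod.inl g' : Monoid.Coprod G H)} =
        Subgroup.map (Coprod.inl : G →* Monoid.Coprod G H) (Subgroup.centralizer {g'}) :=
  centralizer_of_mem_factor_general G H g' hg
end

section
/- In the group G = ℤ² ⋊_C ℤ with C = [[0,-1],[1,-1]], if t = (a', 3k') commutes with K = (a, 3k+n), where n ∈ {1,2}, then t^{3k+n} = K^{3k'} in G. -/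
namespace M333

/-- The monodromy matrix `C = [[0,-1],[1,-1]]`. -/
def Cmat : Matrix (Fin 2) (Fin 2) ℤ := !![0, -1; 1, -1]

/-- The automorphism of `ℤ²` given by `C` (its inverse is `C²`, since `C³ = 1`). -/
def Caut : (Fin 2 → ℤ) ≃+ (Fin 2 → ℤ) where
  toFun v := Cmat.mulVec v
  invFun v := (Cmat ^ 2).mulVec v
  left_inv v := by
    simp only []
    rw [Matrix.mulVec_mulVec, show Cmat ^ 2 * Cmat = 1 by decide, Matrix.one_mulVec]
  right_inv v := by
    simp only []
    rw [Matrix.mulVec_mulVec, show Cmat * Cmat ^ 2 = 1 by decide, Matrix.one_mulVec]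
  map_add' x y := Matrix.mulVec_add Cmat x y

/-- The action of `ℤ` on `ℤ²` with the generator acting by `C`. -/
def φ : Multiplicative ℤ →* MulAut (Multiplicative (Fin 2 → ℤ)) :=
  zpowersHom _ (AddEquiv.toMultiplicative Caut)

/-- The group `G = ℤ² ⋊_C ℤ`, with multiplication `(a, i)(a', j) = (a + Cⁱ a', i + j)`. -/
abbrev G := SemidirectProduct (Multiplicative (Fin 2 → ℤ)) (Multiplicative ℤ) φ

/-- The element `(a, i)` of `G = ℤ² ⋊_C ℤ`. -/
def elt (a : Fin 2 → ℤ) (i : ℤ) : G :=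
  ⟨Multiplicative.ofAdd a, Multiplicative.ofAdd i⟩

noncomputable abbrev A : MulAut (Multiplicative (Fin 2 → ℤ)) := AddEquiv.toMultiplicative Caut

lemma A_apply (v : Fin 2 → ℤ) : A (.ofAdd v) = .ofAdd (Cmat.mulVec v) := rfl

lemma A_pow_three : A ^ 3 = 1 := by
  apply MulEquiv.ext; intro v
  show ((A ^ 3) (Multiplicative.ofAdd v.toAdd)).toAdd = v.toAdd
  rw [pow_succ, pow_succ, pow_one]
  simp only [MulAut.mul_apply, A_apply]
  show (Cmat.mulVec (Cmat.mulVec (Cmat.mulVec v.toAdd))) = v.toAdd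
  rw [Matrix.mulVec_mulVec, Matrix.mulVec_mulVec, show Cmat * Cmat * Cmat = 1 by decide,
    Matrix.one_mulVec]

lemma A_zpow_three : A ^ (3 : ℤ) = 1 := by
  rw [show (3:ℤ) = ((3:ℕ):ℤ) from rfl, zpow_natCast, A_pow_three]

lemma φ_apply (i : ℤ) : φ (.ofAdd i) = A ^ i := by simp [φ]

lemma A_zpow (k n : ℤ) : A ^ (3 * k + n) = A ^ n := by
  rw [zpow_add, zpow_mul, A_zpow_three, one_zpow, one_mul]

lemma φ_three (m : ℤ) : φ (.ofAdd (3 * m)) = 1 := by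
  rw [φ_apply, show 3 * m = 3 * m + 0 by ring, A_zpow, zpow_zero]

lemma elt_mul (a b : Fin 2 → ℤ) (i j : ℤ) :
    elt a i * elt b j = elt (a + (φ (.ofAdd i) (.ofAdd b)).toAdd) (i + j) := rfl

lemma elt_zero_pow (i m : ℤ) : (elt 0 i) ^ m = elt 0 (m * i) := by
  have h : elt 0 i = SemidirectProduct.inr (Multiplicative.ofAdd i) := rfl
  rw [h, ← map_zpow]
  rfl

lemma mulVec_comp (M : Matrix (Fin 2) (Fin 2) ℤ) (v : Fin 2 → ℤ) (i : Fin 2) :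
    M.mulVec v i = M i 0 * v 0 + M i 1 * v 1 := by
  simp [Matrix.mulVec, dotProduct, Fin.sum_univ_two]

lemma main_core (a a' : Fin 2 → ℤ) (k' i : ℤ) (M : Matrix (Fin 2) (Fin 2) ℤ)
    (hM : M = Cmat ∨ M = Cmat ^ 2)
    (hφ : ∀ v : Fin 2 → ℤ, (φ (.ofAdd i) (.ofAdd v)).toAdd = M.mulVec v)
    (hφ2 : ∀ v : Fin 2 → ℤ, (φ (.ofAdd (i + i)) (.ofAdd v)).toAdd = (M * M).mulVec v)
    (hcomm : elt a' (3 * k') * elt a i = elt a i * elt a' (3 * k')) :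
    (elt a' (3 * k')) ^ i = (elt a i) ^ (3 * k') := by
  -- step 1: a' = 0
  have hleft := congrArg (fun g : G => g.left.toAdd) hcomm
  rw [elt_mul, elt_mul] at hleft
  simp only [elt, φ_three] at hleft
  rw [hφ] at hleft
  have ha' : a' = M.mulVec a' := by
    have : a' + a = a + M.mulVec a' := by simpa using hleft
    funext j
    have hj := congrFun this j
    simp only [Pi.add_apply] at hj
    omega
  have ha0 : a' = 0 := by
    rcases hM with rfl | rfl
    · have h0 := congrFun ha' 0
      have h1 := congrFun ha' 1
      rw [mulVec_comp] at h0 h1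
      simp [Cmat] at h0 h1
      funext j; fin_cases j <;> simp <;> omega
    · rw [show Cmat ^ 2 = !![-1,1;-1,0] by decide] at ha'
      have h0 := congrFun ha' 0
      have h1 := congrFun ha' 1
      rw [mulVec_comp] at h0 h1
      simp at h0 h1
      funext j; fin_cases j <;> simp <;> omega
  -- step 2: conclude
  subst ha0
  have hz : a + M.mulVec a + (M * M).mulVec a = 0 := by
    rcases hM with rfl | rfl
    · rw [show Cmat * Cmat = !![-1,1;-1,0] from by decide]
      funext j; fin_cases j <;> simp [mulVec_comp, Cmat] <;> ring
    · rw [show Cmat ^ 2 * Cmat ^ 2 = Cmat from by decide,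
        show Cmat ^ 2 = !![-1,1;-1,0] from by decide]
      funext j; fin_cases j <;> simp [mulVec_comp, Cmat] <;> ring
  have hK3 : (elt a i) ^ (3 : ℕ) = elt 0 (3 * i) := by
    rw [pow_succ, pow_succ, pow_one, elt_mul, elt_mul, hφ a, hφ2 a, hz,
      show i + i + i = 3 * i by ring]
  rw [elt_zero_pow, zpow_mul, show ((3:ℤ)) = ((3:ℕ):ℤ) from rfl, zpow_natCast, hK3,
    elt_zero_pow, show i * (((3:ℕ):ℤ) * k') = k' * (3 * i) by push_cast; ring]

/-- In `G = ℤ² ⋊_C ℤ` with `C = [[0,-1],[1,-1]]`: if `t = (a', 3k')` commutes with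
`K = (a, 3k+n)` where `n ∈ {1,2}`, then `t^{3k+n} = K^{3k'}`. -/
theorem commuting_element_power_relation (a a' : Fin 2 → ℤ) (k k' n : ℤ)
    (hn : n ∈ ({1, 2} : Set ℤ))
    (hcomm : Commute (elt a' (3 * k')) (elt a (3 * k + n))) :
    (elt a' (3 * k')) ^ (3 * k + n) = (elt a (3 * k + n)) ^ (3 * k') := by
  simp only [Set.mem_insert_iff, Set.mem_singleton_iff] at hn
  rcases hn with rfl | rfl
  · refine main_core a a' k' (3 * k + 1) Cmat (Or.inl rfl) ?_ ?_ hcomm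
    · intro v
      rw [φ_apply, A_zpow, zpow_one]
      rfl
    · intro v
      rw [show 3 * k + 1 + (3 * k + 1) = 3 * (2 * k) + 2 by ring, φ_apply, A_zpow,
        show (2:ℤ) = ((2:ℕ):ℤ) from rfl, zpow_natCast, pow_two]
      show Cmat.mulVec (Cmat.mulVec v) = (Cmat * Cmat).mulVec v
      rw [Matrix.mulVec_mulVec]
  · refine main_core a a' k' (3 * k + 2) (Cmat ^ 2) (Or.inr rfl) ?_ ?_ hcomm
    · intro v
      rw [φ_apply, A_zpow, show (2:ℤ) = ((2:ℕ):ℤ) from rfl, zpow_natCast, pow_two, pow_two]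
      show Cmat.mulVec (Cmat.mulVec v) = (Cmat * Cmat).mulVec v
      rw [Matrix.mulVec_mulVec]
    · intro v
      rw [show 3 * k + 2 + (3 * k + 2) = 3 * (2 * k + 1) + 1 by ring, φ_apply, A_zpow, zpow_one,
        show Cmat ^ 2 * Cmat ^ 2 = Cmat from by decide]
      rfl

end M333
end
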